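/- arXiv:2011.03764 — 2 statements merged into one kernel-verified Lean document; each statement's English description precedes it below -/
import Mathlib

section
/- Let μ₁, μ₂ ∈ ℂ and let M = ℂ[x, x⁻¹, y, y⁻¹] be the Laurent polynomial ring in two variables. Define ℂ-linear operators D₁, D₂ : M → M by D₁(xᵐyⁿ) = (m + μ₁)·xᵐ⁻¹yⁿ and D₂(xᵐyⁿ) = (n + μ₂)·xᵐyⁿ⁻¹. Then every nonzero ℂ-subspace of M stable under multiplication by x, multiplication by y, and under D₁ and D₂ equals M if and only if μ₁ ∉ ℤ and μ₂ ∉ ℤ. -/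
/-!
Write `E₁ = x ∘ D₁` and `E₂ = y ∘ D₂`. They act diagonally on monomials, `E₁ xᵐyⁿ = (m + μ₁) xᵐyⁿ`
and `E₂ xᵐyⁿ = (n + μ₂) xᵐyⁿ`, and these eigenvalue pairs separate monomials; applying `Eᵢ - λ`
repeatedly to a nonzero element of an invariant subspace isolates a monomial in it. When neither
`μᵢ` is an integer, the scalars `m + μ₁` and `n + μ₂` never vanish, so `x`, `y`, `D₁`, `D₂` move
that monomial to every other one. Conversely, if `μ₁ = k ∈ ℤ` then `D₁ (x⁻ᵏyⁿ) = 0`, so the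
monomials `xᵐyⁿ` with `m ≥ -k` span a proper nonzero invariant subspace; similarly for `μ₂`.
-/

open AddMonoidAlgebra

namespace AddMonoidAlgebra

variable {K M : Type*}

section Semiring

variable [Semiring K]

theorem eq_top_of_forall_single_mem {N : Submodule K K[M]} (h : ∀ m, single m 1 ∈ N) : N = ⊤ := by
  rw [eq_top_iff, ← (AddMonoidAlgebra.basis M K).span_eq, Submodule.span_le]
  rintro _ ⟨m, rfl⟩
  simpa using h m

theorem supported_ne_bot [Nontrivial K] {s : Set M} {m : M} (hm : m ∈ s) :
    supported K K s ≠ ⊥ :=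
  (Submodule.ne_bot_iff _).mpr ⟨single m 1, by simpa [mem_supported] using hm, by simp⟩

theorem supported_ne_top [Nontrivial K] {s : Set M} {m : M} (hm : m ∉ s) :
    supported K K s ≠ ⊤ := fun h ↦ hm <| by
  simpa [mem_supported] using (h ▸ Submodule.mem_top : single m (1 : K) ∈ supported K K s)

theorem apply_mem_supported_of_apply_single {s : Set M} {T : K[M] →ₗ[K] K[M]} {σ : M → M}
    {e : M → K} (hT : ∀ m, T (single m 1) = e m • single (σ m) 1)
    (hs : ∀ m ∈ s, e m ≠ 0 → σ m ∈ s) : ∀ p ∈ supported K K s, T p ∈ supported K K s := by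
  suffices supported K K s ≤ (supported K K s).comap T from fun p hp ↦ this hp
  rw [supported_eq_span_single, Submodule.span_le]
  rintro _ ⟨m, hm, rfl⟩
  rw [SetLike.mem_coe, Submodule.mem_comap, hT]
  by_cases he : e m = 0
  · simp [he]
  · exact Submodule.smul_mem _ _ (Submodule.subset_span ⟨σ m, hs m hm he, rfl⟩)

end Semiring

theorem coeff_apply_of_apply_single [CommSemiring K] {T : K[M] →ₗ[K] K[M]} {e : M → K}
    (hT : ∀ m, T (single m 1) = e m • single m 1) (p : K[M]) (m : M) :
    (T p).coeff m = e m * p.coeff m := by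
  classical
  induction p using induction_linear with
  | zero => simp
  | add p q hp hq => simp [hp, hq, mul_add]
  | single a r =>
    rw [← mul_one r, ← smul_single', map_smul, hT]
    by_cases h : a = m
    · subst h; simp [mul_comm]
    · simp [h]

theorem single_mem_of_mem_support [Field K] {ι : Type*} {N : Submodule K K[M]}
    {T : ι → K[M] →ₗ[K] K[M]} {e : ι → M → K} (hT : ∀ i m, T i (single m 1) = e i m • single m 1)
    (he : Function.Injective fun m i ↦ e i m) (hN : ∀ i, ∀ p ∈ N, T i p ∈ N) {p : K[M]}
    (hp : p ∈ N) {a : M} (ha : a ∈ p.coeff.support) : single a 1 ∈ N := by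
  classical
  induction hcard : p.coeff.support.card using Nat.strong_induction_on generalizing p with
  | _ n ih =>
  by_cases hsingle : p.coeff.support ⊆ {a}
  · obtain ⟨r, hr⟩ := Finsupp.support_subset_singleton'.mp hsingle
    have hr0 : r ≠ 0 := by simpa [hr] using ha
    rwa [show p = single a r from coeff_injective hr, ← mul_one r, ← smul_single',
      Submodule.smul_mem_iff _ hr0] at hp
  obtain ⟨b, hb, hba⟩ := Finset.not_subset.mp hsingle
  rw [Finset.mem_singleton] at hba
  obtain ⟨i, hi⟩ := Function.ne_iff.mp (he.ne (Ne.symm hba))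
  -- `T i - e i b` kills the monomial `b` of `p` but not `a`.
  set q := T i p - e i b • p
  have hq : ∀ m, q.coeff m = (e i m - e i b) * p.coeff m := fun m ↦ by
    simp [q, coeff_apply_of_apply_single (hT i), sub_mul]
  have hsupp : q.coeff.support ⊆ p.coeff.support.erase b := fun m hm ↦ by
    rw [Finsupp.mem_support_iff, hq] at hm
    exact Finset.mem_erase.mpr
      ⟨by rintro rfl; simp at hm, Finsupp.mem_support_iff.mpr (right_ne_zero_of_mul hm)⟩
  refine ih _ ?_ (p := q) (sub_mem (hN i p hp) (N.smul_mem _ hp)) ?_ rfl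
  · exact hcard ▸ (Finset.card_le_card hsupp).trans_lt (Finset.card_erase_lt_of_mem hb)
  · rw [Finsupp.mem_support_iff, hq]
    exact mul_ne_zero (sub_ne_zero.mpr hi) (Finsupp.mem_support_iff.mp ha)

end AddMonoidAlgebra

theorem intCast_add_ne_zero {R : Type*} [CommRing R] {μ : R} (hμ : ¬∃ k : ℤ, μ = k) (m : ℤ) :
    (m : R) + μ ≠ 0 :=
  fun h ↦ hμ ⟨-m, by push_cast; linear_combination h⟩

theorem forall_mem_of_closed_under_unit_steps {S : Set (ℤ × ℤ)} {a : ℤ × ℤ} (ha : a ∈ S)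
    (hx : ∀ m n, (m, n) ∈ S → (m + 1, n) ∈ S) (hx' : ∀ m n, (m, n) ∈ S → (m - 1, n) ∈ S)
    (hy : ∀ m n, (m, n) ∈ S → (m, n + 1) ∈ S) (hy' : ∀ m n, (m, n) ∈ S → (m, n - 1) ∈ S)
    (c : ℤ × ℤ) : c ∈ S := by
  have row (m : ℤ) : (m, a.2) ∈ S :=
    Int.inductionOn' (motive := fun m ↦ (m, a.2) ∈ S) m a.1 ha (fun k _ ↦ hx k a.2)
      (fun k _ ↦ hx' k a.2)
  exact Int.inductionOn' (motive := fun n ↦ (c.1, n) ∈ S) c.2 a.2 (row c.1) (fun k _ ↦ hy c.1 k)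
    (fun k _ ↦ hy' c.1 k)

section Laurent

variable {μ₁ μ₂ : ℂ} {D₁ D₂ : ℂ[ℤ × ℤ] →ₗ[ℂ] ℂ[ℤ × ℤ]} {N : Submodule ℂ ℂ[ℤ × ℤ]}

theorem exists_single_mem_of_invariant
    (hD₁ : ∀ m n : ℤ, D₁ (single (m, n) 1) = ((m : ℂ) + μ₁) • single (m - 1, n) 1)
    (hD₂ : ∀ m n : ℤ, D₂ (single (m, n) 1) = ((n : ℂ) + μ₂) • single (m, n - 1) 1)
    (hN : N ≠ ⊥) (hx : ∀ p ∈ N, single ((1 : ℤ), (0 : ℤ)) (1 : ℂ) * p ∈ N)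
    (hy : ∀ p ∈ N, single ((0 : ℤ), (1 : ℤ)) (1 : ℂ) * p ∈ N)
    (hd₁ : ∀ p ∈ N, D₁ p ∈ N) (hd₂ : ∀ p ∈ N, D₂ p ∈ N) : ∃ a, single a (1 : ℂ) ∈ N := by
  obtain ⟨p, hp, hp0⟩ := (Submodule.ne_bot_iff N).mp hN
  obtain ⟨a, ha⟩ := Finsupp.support_nonempty_iff.mpr (coeff_eq_zero.not.mpr hp0)
  refine ⟨a, single_mem_of_mem_support
    (T := ![LinearMap.mulLeft ℂ (single (1, 0) 1) ∘ₗ D₁,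
      LinearMap.mulLeft ℂ (single (0, 1) 1) ∘ₗ D₂])
    (e := ![fun c ↦ c.1 + μ₁, fun c ↦ c.2 + μ₂]) ?_ ?_ ?_ hp ha⟩
  · simp only [Fin.forall_fin_two, Prod.forall]
    constructor <;> intro m n <;>
      simp only [Matrix.cons_val, LinearMap.comp_apply, LinearMap.mulLeft_apply, hD₁, hD₂,
        mul_smul_comm, single_mul_single, Prod.mk_add_mk, one_mul] <;> ring_nf
  · intro c d h
    exact Prod.ext (by simpa using congrFun h 0) (by simpa using congrFun h 1)
  · simp only [Fin.forall_fin_two]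
    exact ⟨fun p hp ↦ hx _ (hd₁ p hp), fun p hp ↦ hy _ (hd₂ p hp)⟩

theorem forall_single_mem_of_invariant (hμ₁ : ¬∃ k : ℤ, μ₁ = k) (hμ₂ : ¬∃ k : ℤ, μ₂ = k)
    (hD₁ : ∀ m n : ℤ, D₁ (single (m, n) 1) = ((m : ℂ) + μ₁) • single (m - 1, n) 1)
    (hD₂ : ∀ m n : ℤ, D₂ (single (m, n) 1) = ((n : ℂ) + μ₂) • single (m, n - 1) 1)
    (hx : ∀ p ∈ N, single ((1 : ℤ), (0 : ℤ)) (1 : ℂ) * p ∈ N)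
    (hy : ∀ p ∈ N, single ((0 : ℤ), (1 : ℤ)) (1 : ℂ) * p ∈ N)
    (hd₁ : ∀ p ∈ N, D₁ p ∈ N) (hd₂ : ∀ p ∈ N, D₂ p ∈ N) {a : ℤ × ℤ} (ha : single a (1 : ℂ) ∈ N)
    (c : ℤ × ℤ) : single c (1 : ℂ) ∈ N := by
  refine forall_mem_of_closed_under_unit_steps (S := {c | single c (1 : ℂ) ∈ N}) ha
    ?_ ?_ ?_ ?_ c
  · intro m n h
    simpa [single_mul_single, add_comm] using hx _ h
  · intro m n h
    have := hd₁ _ h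
    rwa [hD₁, Submodule.smul_mem_iff _ (intCast_add_ne_zero hμ₁ m)] at this
  · intro m n h
    simpa [single_mul_single, add_comm] using hy _ h
  · intro m n h
    have := hd₂ _ h
    rwa [hD₂, Submodule.smul_mem_iff _ (intCast_add_ne_zero hμ₂ n)] at this

theorem exists_invariant_ne_bot_ne_top
    (hD₁ : ∀ m n : ℤ, D₁ (single (m, n) 1) = ((m : ℂ) + μ₁) • single (m - 1, n) 1)
    (hD₂ : ∀ m n : ℤ, D₂ (single (m, n) 1) = ((n : ℂ) + μ₂) • single (m, n - 1) 1)
    (hμ : (∃ k : ℤ, μ₁ = k) ∨ ∃ k : ℤ, μ₂ = k) :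
    ∃ N : Submodule ℂ ℂ[ℤ × ℤ], N ≠ ⊥ ∧ N ≠ ⊤ ∧
      (∀ p ∈ N, single ((1 : ℤ), (0 : ℤ)) (1 : ℂ) * p ∈ N) ∧
      (∀ p ∈ N, single ((0 : ℤ), (1 : ℤ)) (1 : ℂ) * p ∈ N) ∧
      (∀ p ∈ N, D₁ p ∈ N) ∧ (∀ p ∈ N, D₂ p ∈ N) := by
  have hmulLeft (g : ℤ × ℤ) (m : ℤ × ℤ) :
      LinearMap.mulLeft ℂ (single g 1) (single m 1) = (1 : ℂ) • single (g + m) (1 : ℂ) := by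
    simp [single_mul_single]
  rcases hμ with ⟨k, hk⟩ | ⟨k, hk⟩
  · refine ⟨supported ℂ ℂ {c | -k ≤ c.1}, supported_ne_bot (m := (-k, 0)) (by simp),
      supported_ne_top (m := (-k - 1, 0)) (by simp), ?_, ?_, ?_, ?_⟩
    · exact apply_mem_supported_of_apply_single (hmulLeft _) fun c hc _ ↦ by
        simp only [Set.mem_ofPred_eq, Prod.fst_add] at hc ⊢; omega
    · exact apply_mem_supported_of_apply_single (hmulLeft _) fun c hc _ ↦ by simpa using hc
    · refine apply_mem_supported_of_apply_single (fun c ↦ hD₁ c.1 c.2) fun c hc he ↦ ?_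
      rw [hk] at he
      have : c.1 + k ≠ 0 := by exact_mod_cast he
      simp only [Set.mem_ofPred_eq] at hc ⊢; omega
    · exact apply_mem_supported_of_apply_single (fun c ↦ hD₂ c.1 c.2) fun c hc _ ↦ hc
  · refine ⟨supported ℂ ℂ {c | -k ≤ c.2}, supported_ne_bot (m := (0, -k)) (by simp),
      supported_ne_top (m := (0, -k - 1)) (by simp), ?_, ?_, ?_, ?_⟩
    · exact apply_mem_supported_of_apply_single (hmulLeft _) fun c hc _ ↦ by simpa using hc
    · exact apply_mem_supported_of_apply_single (hmulLeft _) fun c hc _ ↦ by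
        simp only [Set.mem_ofPred_eq, Prod.snd_add] at hc ⊢; omega
    · exact apply_mem_supported_of_apply_single (fun c ↦ hD₁ c.1 c.2) fun c hc _ ↦ hc
    · refine apply_mem_supported_of_apply_single (fun c ↦ hD₂ c.1 c.2) fun c hc he ↦ ?_
      rw [hk] at he
      have : c.2 + k ≠ 0 := by exact_mod_cast he
      simp only [Set.mem_ofPred_eq] at hc ⊢; omega

end Laurent

open AddMonoidAlgebra in
/-- Simplicity criterion in two variables: on the Laurent polynomial ring
`M = ℂ[x,x⁻¹,y,y⁻¹]` (modeled as the monoid algebra of `ℤ × ℤ`), with twisted derivatives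
`D₁(xᵐyⁿ) = (m+μ₁)xᵐ⁻¹yⁿ` and `D₂(xᵐyⁿ) = (n+μ₂)xᵐyⁿ⁻¹`, every nonzero subspace stable
under multiplication by `x`, multiplication by `y`, `D₁` and `D₂` equals `M` iff
`μ₁ ∉ ℤ` and `μ₂ ∉ ℤ`. -/
theorem stmt_11 (μ₁ μ₂ : ℂ)
    (D₁ D₂ : AddMonoidAlgebra ℂ (ℤ × ℤ) →ₗ[ℂ] AddMonoidAlgebra ℂ (ℤ × ℤ))
    (hD₁ : ∀ m n : ℤ, D₁ (single (m, n) 1) = ((m : ℂ) + μ₁) • single (m - 1, n) 1)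
    (hD₂ : ∀ m n : ℤ, D₂ (single (m, n) 1) = ((n : ℂ) + μ₂) • single (m, n - 1) 1) :
    (∀ N : Submodule ℂ (AddMonoidAlgebra ℂ (ℤ × ℤ)), N ≠ ⊥ →
        (∀ p ∈ N, single ((1 : ℤ), (0 : ℤ)) (1 : ℂ) * p ∈ N) →
        (∀ p ∈ N, single ((0 : ℤ), (1 : ℤ)) (1 : ℂ) * p ∈ N) →
        (∀ p ∈ N, D₁ p ∈ N) → (∀ p ∈ N, D₂ p ∈ N) → N = ⊤) ↔
      (¬∃ k : ℤ, μ₁ = (k : ℂ)) ∧ ¬∃ k : ℤ, μ₂ = (k : ℂ) := by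
  constructor
  · intro h
    by_contra hμ
    obtain ⟨N, hN₀, hN, hx, hy, hd₁, hd₂⟩ :=
      exists_invariant_ne_bot_ne_top hD₁ hD₂ (by simpa only [not_and_or, not_not] using hμ)
    exact hN (h N hN₀ hx hy hd₁ hd₂)
  · rintro ⟨hμ₁, hμ₂⟩ N hN hx hy hd₁ hd₂
    obtain ⟨a, ha⟩ := exists_single_mem_of_invariant hD₁ hD₂ hN hx hy hd₁ hd₂
    exact eq_top_of_forall_single_mem
      (forall_single_mem_of_invariant hμ₁ hμ₂ hD₁ hD₂ hx hy hd₁ hd₂ ha)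
end

section
/- Let μ ∈ ℂ, M = ℂ[x, x⁻¹], and D_μ : M → M the ℂ-linear operator with D_μ(xⁿ) = (n + μ)·xⁿ⁻¹. Let N be the smallest ℂ-subspace of M containing the constant 1 and stable under multiplication by x and under D_μ. Then N = M if and only if μ is not a nonnegative integer. -/
/-!
If `μ = k` is a nonnegative integer, then `D_μ (x⁻ᵏ) = 0`, so the span of the monomials `xⁿ` with
`n ≥ -k` contains `1` and is stable under `x` and `D_μ`; it misses `x⁻ᵏ⁻¹`, hence so does `N`.
Otherwise `D_μ (xⁿ) = (n + μ) xⁿ⁻¹` with `n + μ ≠ 0` for every `n ≤ 0`, so starting from `1`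
multiplication by `x` and `D_μ` reach every monomial.
-/

namespace LaurentPolynomial

open AddMonoidAlgebra (supported)

section Semiring

variable {R : Type*} [Semiring R]

theorem span_range_T : Submodule.span R (Set.range (T : ℤ → R[T;T⁻¹])) = ⊤ :=
  (AddMonoidAlgebra.basis ℤ R).span_eq

theorem eq_top_of_forall_T_mem {N : Submodule R R[T;T⁻¹]} (h : ∀ n, T n ∈ N) : N = ⊤ := by
  rw [eq_top_iff, ← span_range_T, Submodule.span_le]
  rintro _ ⟨n, rfl⟩
  exact h n

theorem supported_eq_span_T (s : Set ℤ) :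
    supported R R s = Submodule.span R (T '' s : Set R[T;T⁻¹]) :=
  AddMonoidAlgebra.supported_eq_span_single R s

theorem T_mem_supported [Nontrivial R] {s : Set ℤ} {n : ℤ} :
    (T n : R[T;T⁻¹]) ∈ supported R R s ↔ n ∈ s := by
  rw [supported_eq_span_T]
  exact AddMonoidAlgebra.single_mem_span_single

theorem supported_le_comap {s : Set ℤ} {f : R[T;T⁻¹] →ₗ[R] R[T;T⁻¹]}
    (hf : ∀ n ∈ s, f (T n) ∈ supported R R s) :
    supported R R s ≤ (supported R R s).comap f := by
  rw [supported_eq_span_T, Submodule.span_le]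
  rintro _ ⟨n, hn, rfl⟩
  rw [← supported_eq_span_T]
  exact hf n hn

end Semiring

section CommRing

variable {R : Type*} [CommRing R] [Nontrivial R]

theorem T_one_mul_mem_supported_Ici {k : ℤ} {p : R[T;T⁻¹]} (hp : p ∈ supported R R (Set.Ici k)) :
    T 1 * p ∈ supported R R (Set.Ici k) := by
  refine supported_le_comap (f := LinearMap.mulLeft R (T 1)) (fun n hn => ?_) hp
  rw [LinearMap.mulLeft_apply, ← T_add, T_mem_supported, Set.mem_Ici]
  exact hn.out.trans (by omega)

theorem map_mem_supported_Ici_neg {k : ℕ} {D : R[T;T⁻¹] →ₗ[R] R[T;T⁻¹]}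
    (hD : ∀ n : ℤ, D (T n) = ((n : R) + k) • T (n - 1)) {p : R[T;T⁻¹]}
    (hp : p ∈ supported R R (Set.Ici (-k : ℤ))) :
    D p ∈ supported R R (Set.Ici (-k : ℤ)) := by
  refine supported_le_comap (fun n hn => ?_) hp
  rw [hD]
  rcases (Set.mem_Ici.mp hn).eq_or_lt with rfl | hlt
  · simp
  · exact Submodule.smul_mem _ _ (T_mem_supported.mpr (Set.mem_Ici.mpr (by omega)))

end CommRing

section Field

variable {K : Type*} [Field K] {μ : K} {D : K[T;T⁻¹] →ₗ[K] K[T;T⁻¹]} {N : Submodule K K[T;T⁻¹]}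

theorem T_mem_of_forall_ne_natCast (hμ : ∀ k : ℕ, μ ≠ k)
    (hD : ∀ n : ℤ, D (T n) = ((n : K) + μ) • T (n - 1)) (h1 : 1 ∈ N)
    (hx : ∀ p ∈ N, T 1 * p ∈ N) (hDN : ∀ p ∈ N, D p ∈ N) (n : ℤ) : T n ∈ N := by
  induction n using Int.induction_on with
  | zero => rwa [T_zero]
  | succ m ih => rw [add_comm, T_add]; exact hx _ ih
  | pred m ih =>
    have hm : ((-(m : ℤ) : ℤ) : K) + μ ≠ 0 := by
      push_cast
      exact fun h => hμ m (by linear_combination h)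
    have hDm := N.smul_mem (((-(m : ℤ) : ℤ) : K) + μ)⁻¹ (hDN _ ih)
    rwa [hD, smul_smul, inv_mul_cancel₀ hm, one_smul] at hDm

end Field

end LaurentPolynomial

open LaurentPolynomial in
/-- For the twisted derivative `D_μ` on `ℂ[x, x⁻¹]`, the smallest subspace containing `1`
and stable under multiplication by `x` and under `D_μ` is the whole space iff `μ` is not a
nonnegative integer. -/
theorem stmt_12 (μ : ℂ) (D : LaurentPolynomial ℂ →ₗ[ℂ] LaurentPolynomial ℂ)
    (hD : ∀ n : ℤ, D (T n) = ((n : ℂ) + μ) • T (n - 1))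
    (N : Submodule ℂ (LaurentPolynomial ℂ))
    (h1 : (1 : LaurentPolynomial ℂ) ∈ N)
    (hx : ∀ p ∈ N, T 1 * p ∈ N) (hDN : ∀ p ∈ N, D p ∈ N)
    (hmin : ∀ N' : Submodule ℂ (LaurentPolynomial ℂ),
      (1 : LaurentPolynomial ℂ) ∈ N' → (∀ p ∈ N', T 1 * p ∈ N') →
      (∀ p ∈ N', D p ∈ N') → N ≤ N') :
    N = ⊤ ↔ ¬∃ k : ℕ, μ = (k : ℂ) := by
  constructor
  · rintro hN ⟨k, rfl⟩
    have hle : N ≤ AddMonoidAlgebra.supported ℂ ℂ (Set.Ici (-k : ℤ)) :=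
      hmin _ (by rw [← T_zero, T_mem_supported, Set.mem_Ici]; omega)
        (fun _ => T_one_mul_mem_supported_Ici) (fun _ => map_mem_supported_Ici_neg hD)
    have hmem := hle (hN ▸ Submodule.mem_top : T (-(k : ℤ) - 1) ∈ N)
    rw [T_mem_supported, Set.mem_Ici] at hmem
    omega
  · intro hμ
    exact eq_top_of_forall_T_mem
      (T_mem_of_forall_ne_natCast (fun k hk => hμ ⟨k, hk⟩) hD h1 hx hDN)
end
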